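/- arXiv:2011.04524 — 3 statements merged into one kernel-verified Lean document; each statement's English description precedes it below -/
import Mathlib

section
/- For any permutation rack (X, φ), the rack automorphism φ induces the identity map on rack homology HR_n(X, φ) for all n; more precisely, for any fixed x ∈ X, the degree-raising operator h(w) = x·w satisfies id − φ = d∘h + h∘d on the rack chain complex. -/
/-!
Prefixing a fixed letter `x` is a chain homotopy between `id` and `φ`. In the differential of
`x·w`, the `0`-th face contributes `w - x ▷ w = w - φ(w)`, because in a permutation rack
`x ▷ y = φ(y)` does not depend on `x`; the higher faces contribute exactly `-x·(dw)`. Hence for a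
cycle `c` of positive degree, `φ(c) - c = d(-x·c)`. In degree `0`, and when `X` is empty, `φ`
acts trivially on chains.
-/

/-- Rack chains: free abelian group on `n`-tuples. -/
abbrev CR (X : Type) (n : ℕ) : Type := (Fin n → X) →₀ ℤ

/-- The monomial basis element. -/
noncomputable def mon {X : Type} {n : ℕ} (w : Fin n → X) : CR X n := Finsupp.single w 1

/-- Delete the `(i+1)`-st entry (1-indexed `k = i+1`). -/
def del {X : Type} {n : ℕ} (w : Fin (n+1) → X) (i : Fin n) : Fin n → X :=
  fun j => if (j : ℕ) < (i : ℕ) then w j.castSucc else w j.succ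

/-- Delete the `(i+1)`-st entry and act with it on all later entries. -/
def act {X : Type} (op : X → X → X) {n : ℕ} (w : Fin (n+1) → X) (i : Fin n) : Fin n → X :=
  fun j => if (j : ℕ) < (i : ℕ) then w j.castSucc else op (w i.castSucc) (w j.succ)

/-- Rack differential on a monomial. -/
noncomputable def dMon {X : Type} (op : X → X → X) {n : ℕ} (w : Fin (n+1) → X) : CR X n :=
  ∑ i : Fin n, ((-1 : ℤ) ^ (i : ℕ)) • (mon (del w i) - mon (act op w i))

/-- The rack differential `CR_{n+1} → CR_n`. -/
noncomputable def d {X : Type} (op : X → X → X) (n : ℕ) : CR X (n+1) →+ CR X n :=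
  Finsupp.liftAddHom fun w => zmultiplesHom _ (dMon op w)

/-- Left concatenation `w ↦ x·w`. -/
noncomputable def consHom {X : Type} (x : X) (n : ℕ) : CR X n →+ CR X (n+1) :=
  Finsupp.liftAddHom fun w => zmultiplesHom _ (mon (Fin.cons x w))

/-- Diagonal action of a map `φ` on chains. -/
noncomputable def mapChains {X : Type} (φ : X → X) (n : ℕ) : CR X n →+ CR X n :=
  Finsupp.liftAddHom fun w => zmultiplesHom _ (mon (φ ∘ w))

/-- Cycles. -/
noncomputable def ZC {X : Type} (op : X → X → X) : (n : ℕ) → AddSubgroup (CR X n)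
  | 0 => ⊤
  | (m+1) => (d op m).ker

/-- Boundaries. -/
noncomputable def BC {X : Type} (op : X → X → X) (n : ℕ) : AddSubgroup (CR X n) :=
  (d op n).range

/-- Rack homology. -/
abbrev HR (X : Type) (op : X → X → X) (n : ℕ) : Type :=
  ZC op n ⧸ ((BC op n).addSubgroupOf (ZC op n))

/-- The rack operation of a permutation rack. -/
def permOp {X : Type} (φ : X ≃ X) : X → X → X := fun _ y => φ y

/-- Multiplication by an element of `ℤX`. -/
noncomputable def mulChain {X : Type} (v : X →₀ ℤ) (n : ℕ) : CR X n →+ CR X (n+1) :=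
  ∑ x ∈ v.support, v x • consHom x n

section ChainOperators

variable {X : Type}

@[simp]
lemma d_mon (op : X → X → X) {n : ℕ} (w : Fin (n+1) → X) : d op n (mon w) = dMon op w := by
  simp [d, mon]

@[simp]
lemma consHom_mon (x : X) {n : ℕ} (w : Fin n → X) : consHom x n (mon w) = mon (Fin.cons x w) := by
  simp [consHom, mon]

@[simp]
lemma mapChains_mon (φ : X → X) {n : ℕ} (w : Fin n → X) : mapChains φ n (mon w) = mon (φ ∘ w) := by
  simp [mapChains, mon]

lemma mapChains_zero (φ : X → X) : mapChains φ 0 = AddMonoidHom.id (CR X 0) := by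
  ext w : 2
  show mapChains φ 0 (mon w) = mon w
  rw [mapChains_mon, Subsingleton.elim (φ ∘ w) w]

end ChainOperators

section FaceMaps

variable {X : Type} {n : ℕ}

lemma del_cons_zero (x : X) (w : Fin (n+1) → X) : del (Fin.cons x w) 0 = w := by
  funext j
  simp [del]

lemma act_cons_zero (op : X → X → X) (x : X) (w : Fin (n+1) → X) :
    act op (Fin.cons x w) 0 = op x ∘ w := by
  funext j
  simp [act]

lemma del_cons_succ (x : X) (w : Fin (n+1) → X) (i : Fin n) :
    del (Fin.cons x w) i.succ = Fin.cons x (del w i) := by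
  funext j
  cases j using Fin.cases with
  | zero => simp [del]
  | succ j => by_cases h : (j : ℕ) < i <;> simp [del, h]

lemma act_cons_succ (op : X → X → X) (x : X) (w : Fin (n+1) → X) (i : Fin n) :
    act op (Fin.cons x w) i.succ = Fin.cons x (act op w i) := by
  funext j
  cases j using Fin.cases with
  | zero => simp [act]
  | succ j => by_cases h : (j : ℕ) < i <;> simp [act, h]

lemma dMon_cons (op : X → X → X) (x : X) (w : Fin (n+1) → X) :
    dMon op (Fin.cons x w) = mon w - mon (op x ∘ w) - consHom x n (dMon op w) := by
  simp only [dMon, Fin.sum_univ_succ, del_cons_zero, act_cons_zero, del_cons_succ,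
    act_cons_succ, map_sum, map_zsmul, map_sub, consHom_mon, Fin.val_zero, Fin.val_succ,
    pow_zero, one_smul, pow_succ, mul_neg_one, neg_smul, Finset.sum_neg_distrib]
  abel

end FaceMaps

section PermutationRack

variable {X : Type} (φ : X ≃ X)

theorem sub_mapChains_eq_d_consHom_add_consHom_d (n : ℕ) (x : X) (w : CR X (n+1)) :
    w - mapChains φ (n+1) w =
      d (permOp φ) (n+1) (consHom x (n+1) w) + consHom x n (d (permOp φ) n w) := by
  suffices AddMonoidHom.id _ - mapChains φ (n+1) =
      (d (permOp φ) (n+1)).comp (consHom x (n+1)) + (consHom x n).comp (d (permOp φ) n) from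
    DFunLike.congr_fun this w
  ext v : 2
  show mon v - mapChains φ (n+1) (mon v) =
    d (permOp φ) (n+1) (consHom x (n+1) (mon v)) + consHom x n (d (permOp φ) n (mon v))
  simp only [mapChains_mon, consHom_mon, d_mon, dMon_cons]
  abel

theorem mapChains_sub_self_mem_BC {n : ℕ} {c : CR X n} (hc : c ∈ ZC (permOp φ) n) :
    mapChains φ n c - c ∈ BC (permOp φ) n := by
  cases n with
  | zero => simp [mapChains_zero, BC]
  | succ m =>
    rcases isEmpty_or_nonempty X with _ | ⟨⟨x⟩⟩
    · simp [Subsingleton.elim c 0, BC]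
    · have hdc : d (permOp φ) m c = 0 := hc
      refine ⟨-consHom x (m+1) c, ?_⟩
      rw [map_neg, neg_eq_iff_eq_neg, neg_sub, sub_mapChains_eq_d_consHom_add_consHom_d φ m x,
        hdc, map_zero, add_zero]

end PermutationRack

/-- The permutation `φ` induces the identity on rack homology: for any fixed `x`, the
operator `h(w) = x·w` is a chain homotopy between `id` and `φ`; consequently for every
cycle `c` the chain `φ(c) − c` is a boundary. -/
theorem permutation_induces_identity (X : Type) (φ : X ≃ X) :
    (∀ (n : ℕ) (x : X) (w : CR X (n+1)),
      w - mapChains (⇑φ) (n+1) w =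
        d (permOp φ) (n+1) (consHom x (n+1) w) + consHom x n (d (permOp φ) n w)) ∧
    (∀ (n : ℕ) (c : CR X n), c ∈ ZC (permOp φ) n →
      mapChains (⇑φ) n c - c ∈ BC (permOp φ) n) :=
  ⟨sub_mapChains_eq_d_consHom_add_consHom_d φ, fun _ _ => mapChains_sub_self_mem_BC φ⟩
end

section
/- Let X = ℤ × S with the free permutation φ(n, s) = (n+1, s). If a chain c in CR_•(X, φ) is such that c − φ(c) is a ℤ-linear combination of monomials whose first entry lies in {0} × S, then c = 0. -/
/-- The shift map of the free permutation rack `ℤ × S`. -/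
def shift (S : Type) : ℤ × S → ℤ × S := fun p => (p.1 + 1, p.2)

/-!
The hypothesis says that the coefficients of `c` are invariant under the shift `w ↦ φ ∘ w`, except
where it moves the level `(w 0).1` from `-1` to `0`. So on each shift orbit the coefficients are constant
on the infinite upward ray from level `0` and on the infinite downward ray from level `-1`; a finitely
supported function that is constant on an infinite set vanishes there.
-/

theorem Finsupp.eq_zero_of_apply_injective_eq {α M : Type*} [Zero M] (f : α →₀ M) {u : ℕ → α}
    (hu : Function.Injective u) {a : M} (hconst : ∀ k, f (u k) = a) : a = 0 := by
  by_contra ha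
  have hsub : Set.range u ⊆ f.support := by
    rintro _ ⟨k, rfl⟩
    simpa [hconst k] using ha
  exact Set.infinite_range_of_injective hu (f.support.finite_toSet.subset hsub)

theorem mapChains_apply_comp {X : Type} {φ : X → X} (hφ : Function.Injective φ) {n : ℕ}
    (c : CR X n) (w : Fin n → X) : mapChains φ n c (φ ∘ w) = c w := by
  have hmap : mapChains φ n c = Finsupp.mapDomain (φ ∘ ·) c := by
    rw [mapChains, Finsupp.liftAddHom_apply, Finsupp.mapDomain]
    refine Finsupp.sum_congr fun w _ => ?_
    rw [zmultiplesHom_apply, mon, Finsupp.smul_single, smul_eq_mul, mul_one]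
  rw [hmap]
  exact Finsupp.mapDomain_apply hφ.comp_left c w

namespace FreeRack

variable {S : Type} {m : ℕ}

theorem shift_injective (S : Type) : Function.Injective (shift S) := by
  intro a b hab
  simpa [shift, Prod.ext_iff] using hab

def translate (k : ℤ) (w : Fin m → ℤ × S) : Fin m → ℤ × S :=
  fun j => ((w j).1 + k, (w j).2)

@[simp]
theorem translate_apply_fst (k : ℤ) (w : Fin m → ℤ × S) (j : Fin m) :
    (translate k w j).1 = (w j).1 + k := rfl

@[simp]
theorem translate_zero (w : Fin m → ℤ × S) : translate 0 w = w := by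
  funext j
  simp [translate]

theorem shift_comp_translate (k : ℤ) (w : Fin m → ℤ × S) :
    shift S ∘ translate k w = translate (k + 1) w := by
  funext j
  simp [shift, translate, add_assoc]

theorem translate_left_injective (w : Fin (m + 1) → ℤ × S) :
    Function.Injective fun k : ℤ => translate k w := by
  intro k l hkl
  simpa using congrArg (fun v => (v 0).1) hkl

theorem eq_zero_of_apply_shift_comp_eq {M : Type*} [Zero M] (f : (Fin (m + 1) → ℤ × S) →₀ M)
    (hstep : ∀ v, (v 0).1 ≠ -1 → f (shift S ∘ v) = f v) : f = 0 := by
  ext v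
  rcases le_or_gt 0 (v 0).1 with hv | hv
  · have hup : ∀ k : ℕ, f (translate k v) = f v := by
      intro k
      induction k with
      | zero => simp
      | succ k ih =>
        rw [Nat.cast_succ, ← shift_comp_translate, hstep _ (by simp only [translate_apply_fst]; omega), ih]
    exact f.eq_zero_of_apply_injective_eq
      ((translate_left_injective v).comp Nat.cast_injective) hup
  · have hdown : ∀ k : ℕ, f (translate (-k) v) = f v := by
      intro k
      induction k with
      | zero => simp
      | succ k ih =>
        have hk : -((k + 1 : ℕ) : ℤ) + 1 = -k := by push_cast; ring
        rw [← hstep _ (by simp only [translate_apply_fst]; omega), shift_comp_translate, hk, ih]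
    exact f.eq_zero_of_apply_injective_eq
      ((translate_left_injective v).comp (neg_injective.comp Nat.cast_injective)) hdown

end FreeRack

open FreeRack in
/-- On the free permutation rack `(ℤ × S, +1)`: if `c − φ(c)` is supported on monomials
whose first entry lies in `{0} × S`, then `c = 0`. -/
theorem free_rack_vanishing_criterion (S : Type) (n : ℕ) (c : CR (ℤ × S) (n+1))
    (h : ∀ w ∈ (c - mapChains (shift S) (n+1) c).support, (w 0).1 = 0) :
    c = 0 := by
  refine eq_zero_of_apply_shift_comp_eq c fun v hv => ?_
  have hlevel : ((shift S ∘ v) 0).1 ≠ 0 := by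
    simp only [Function.comp_apply, shift]
    omega
  have hcoeff := Finsupp.notMem_support_iff.mp (mt (h _) hlevel)
  rwa [Finsupp.sub_apply, mapChains_apply_comp (shift_injective S), sub_eq_zero] at hcoeff
end

section
/- For the free permutation rack (ℤ × S, +1) on a set S, every n-cycle with n ≥ 2 is, modulo boundaries, represented by an element of ⟨S̄⟩ ⊗ CR_{n−1}, i.e., a linear combination Σ (s−t)·c_s of chains whose first tensor factor is an augmentation-zero combination of elements of {0} × S. -/
/-- The rack operation of the free permutation rack `ℤ × S`. -/
def shiftOp (S : Type) : ℤ × S → ℤ × S → ℤ × S := fun _ p => (p.1 + 1, p.2)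

/-! Since `d(x·w) = w − φ(w) − x·d(w)`, the boundaries of `φx·x·u` and of `x·x·φ⁻¹u` let a chain
`x·u` trade its first letter `x` for `φx` or `φ⁻¹x` modulo boundaries, so every chain is homologous
to one whose words all begin at level `0` (the level of `(k, s)` being `k`). For such a chain
`c = Σ x·uₓ`, the differential is `V − φV` plus chains beginning at level `0`, where `V = Σ uₓ`.
If `c` is a cycle, then `V − φV` is concentrated at level `0`, which forces the finitely supported
`V` to vanish because `φ` shifts levels; hence `c = Σ (x − t)·uₓ` for any fixed `t ∈ {0} × S`. -/

/-- Since `g` raises the level `h` by one, a nonzero `V` would propagate its support upwards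
from its highest level if that is `≥ 0`, and downwards from its lowest level otherwise. -/
lemma Finsupp.eq_zero_of_invariant_off_level_zero {α M : Type*} [Zero M] (g : α ≃ α)
    (h : α → ℤ) (hg : ∀ a, h (g a) = h a + 1) (V : α →₀ M)
    (hV : ∀ a, h (g a) ≠ 0 → V (g a) = V a) : V = 0 := by
  classical
  by_contra hV0
  have hstep : ∀ a, h (g a) ≠ 0 → (g a ∈ V.support ↔ a ∈ V.support) := fun a ha => by
    simp only [Finsupp.mem_support_iff, hV a ha]
  rcases (V.support.filter (0 ≤ h ·)).eq_empty_or_nonempty with hneg | hnonneg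
  · obtain ⟨a, ha, hmin⟩ := V.support.exists_min_image h (Finsupp.support_nonempty_iff.2 hV0)
    have ha_neg : h a < 0 := by
      by_contra! ha_nonneg
      exact Finset.notMem_empty a (hneg ▸ Finset.mem_filter.2 ⟨ha, ha_nonneg⟩)
    have hga := hg (g.symm a)
    rw [g.apply_symm_apply] at hga
    have hb := (hstep (g.symm a) (by rw [g.apply_symm_apply]; omega)).1 (by simpa using ha)
    linarith [hmin _ hb]
  · obtain ⟨a, ha, hmax⟩ := Finset.exists_max_image _ h hnonneg
    obtain ⟨ha, ha_nonneg⟩ := Finset.mem_filter.1 ha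
    have hga_level := hg a
    have hga := (hstep a (by omega)).2 ha
    linarith [hmax (g a) (Finset.mem_filter.2 ⟨hga, by omega⟩)]

namespace RackChain

section Chains

variable {X : Type} {m : ℕ}

lemma consHom_eq_mapDomain (x : X) :
    consHom x m = Finsupp.mapDomain.addMonoidHom (Fin.cons (α := fun _ => X) x) :=
  Finsupp.addHom_ext fun w z => by simp [consHom, mon, Finsupp.mapDomain_single]

lemma mapChains_eq_mapDomain (φ : X → X) :
    mapChains φ m = Finsupp.mapDomain.addMonoidHom (φ ∘ ·) :=
  Finsupp.addHom_ext fun w z => by simp [mapChains, mon, Finsupp.mapDomain_single]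

@[simp] lemma consHom_single (x : X) (w : Fin m → X) (z : ℤ) :
    consHom x m (Finsupp.single w z) = Finsupp.single (Fin.cons x w) z := by
  simp [consHom_eq_mapDomain]

@[simp] lemma mapChains_single (φ : X → X) (w : Fin m → X) (z : ℤ) :
    mapChains φ m (Finsupp.single w z) = Finsupp.single (φ ∘ w) z := by
  simp [mapChains_eq_mapDomain]

@[simp] lemma d_single (op : X → X → X) (w : Fin (m+1) → X) (z : ℤ) :
    d op m (Finsupp.single w z) = z • dMon op w := by
  simp [d]

lemma mapChains_consHom (φ : X → X) (x : X) (c : CR X m) :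
    mapChains φ (m+1) (consHom x m c) = consHom (φ x) m (mapChains φ m c) := by
  simp only [mapChains_eq_mapDomain, consHom_eq_mapDomain, Finsupp.mapDomain.addMonoidHom_apply,
    ← Finsupp.mapDomain_comp]
  congr 1
  funext w
  exact Fin.comp_cons φ x w

lemma mapChains_apply_comp (φ : X ≃ X) (c : CR X m) (w : Fin m → X) :
    mapChains φ m c (φ ∘ w) = c w := by
  rw [mapChains_eq_mapDomain, Finsupp.mapDomain.addMonoidHom_apply]
  exact Finsupp.mapDomain_apply φ.injective.comp_left c w

lemma mapChains_mapChains_symm (φ : X ≃ X) (c : CR X m) :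
    mapChains φ m (mapChains φ.symm m c) = c := by
  simp only [mapChains_eq_mapDomain, Finsupp.mapDomain.addMonoidHom_apply,
    ← Finsupp.mapDomain_comp]
  convert Finsupp.mapDomain_id
  funext w
  simp [Function.comp_def]

noncomputable def tailHom (m : ℕ) : CR X (m+1) →+ CR X m :=
  Finsupp.mapDomain.addMonoidHom (Fin.tail : (Fin (m+1) → X) → Fin m → X)

@[simp] lemma tailHom_consHom (x : X) (c : CR X m) : tailHom m (consHom x m c) = c := by
  simp only [tailHom, consHom_eq_mapDomain, Finsupp.mapDomain.addMonoidHom_apply,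
    ← Finsupp.mapDomain_comp]
  convert Finsupp.mapDomain_id
  funext w
  exact Fin.tail_cons (α := fun _ => X) x w

end Chains

section Faces

variable {X : Type} {m : ℕ} (op : X → X → X)

lemma del_eq_act (w : Fin (m+1) → X) (i : Fin m) : del w i = act (fun _ y => y) w i := rfl

lemma act_cons_zero (x : X) (w : Fin (m+1) → X) :
    act op (Fin.cons x w) 0 = fun j => op x (w j) := by
  funext j
  simp [act]

lemma act_cons_succ (x : X) (w : Fin (m+1) → X) (i : Fin m) :
    act op (Fin.cons x w) i.succ = Fin.cons x (act op w i) := by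
  funext j
  induction j using Fin.cases with
  | zero => simp [act]
  | succ j =>
    simp only [act, Fin.val_succ, add_lt_add_iff_right, Fin.cons_succ]
    split
    · exact Fin.cons_succ (α := fun _ => X) x w j.castSucc
    · rfl

lemma act_comp {φ : X → X} (hφ : ∀ x y, op (φ x) (φ y) = φ (op x y))
    (w : Fin (m+1) → X) (i : Fin m) : act op (φ ∘ w) i = φ ∘ act op w i := by
  funext j
  simp only [act, Function.comp]
  split <;> simp [hφ]

end Faces

section PermutationRack

variable {X : Type} {m : ℕ} (φ : X ≃ X)

lemma dMon_cons (x : X) (w : Fin (m+1) → X) :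
    dMon (permOp φ) (Fin.cons x w)
      = mon w - mon (φ ∘ w) - consHom x m (dMon (permOp φ) w) := by
  have hsucc : ∑ i : Fin m, ((-1 : ℤ) ^ (i.succ : ℕ)) •
      (mon (del (Fin.cons x w) i.succ) - mon (act (permOp φ) (Fin.cons x w) i.succ))
      = -consHom x m (dMon (permOp φ) w) := by
    simp only [dMon, map_sum, map_zsmul, map_sub, ← Finset.sum_neg_distrib, del_eq_act,
      act_cons_succ, Fin.val_succ, pow_succ, mul_neg_one, neg_smul, mon, consHom_single]
  rw [dMon, Fin.sum_univ_succ, hsucc, del_eq_act, act_cons_zero, act_cons_zero]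
  simp only [Fin.val_zero, pow_zero, one_smul, ← sub_eq_add_neg]
  rfl

lemma d_consHom (x : X) (c : CR X (m+1)) :
    d (permOp φ) (m+1) (consHom x (m+1) c)
      = c - mapChains φ (m+1) c - consHom x m (d (permOp φ) m c) := by
  induction c using Finsupp.induction_linear with
  | zero => simp
  | add f g hf hg => simp only [map_add, hf, hg]; abel
  | single w z =>
    simp only [consHom_single, d_single, mapChains_single, dMon_cons, map_zsmul, mon]
    simp only [smul_sub, Finsupp.smul_single, smul_eq_mul, mul_one]

lemma d_mapChains (op : X → X → X) {ψ : X → X} (hψ : ∀ x y, op (ψ x) (ψ y) = ψ (op x y))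
    (c : CR X (m+1)) : d op m (mapChains ψ (m+1) c) = mapChains ψ m (d op m c) := by
  induction c using Finsupp.induction_linear with
  | zero => simp
  | add f g hf hg => simp only [map_add, hf, hg]
  | single w z =>
    simp only [mapChains_single, d_single, map_zsmul, dMon, map_sum, map_sub, mon, del_eq_act,
      act_comp _ hψ, act_comp (fun _ y : X => y) (φ := ψ) fun _ _ => rfl]

lemma d_d (c : CR X (m+2)) : d (permOp φ) m (d (permOp φ) (m+1) c) = 0 := by
  induction m with
  | zero =>
    rw [show d (permOp φ) 0 = 0 from Finsupp.addHom_ext fun _ _ => by simp [dMon]]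
    rfl
  | succ m ih =>
    induction c using Finsupp.induction_linear with
    | zero => simp
    | add f g hf hg => simp [hf, hg]
    | single w z =>
      rw [← Fin.cons_self_tail w, ← consHom_single, d_consHom, map_sub, map_sub, d_consHom,
        d_mapChains (permOp φ) (ψ := φ) (fun _ _ => rfl), ih, map_zero]
      abel

lemma consHom_sub_consHom_apply_mem_BC (x : X) (u : CR X (m+1)) :
    consHom x (m+1) u - consHom (φ x) (m+1) (u - consHom x m (d (permOp φ) m u))
      ∈ BC (permOp φ) (m+2) :=
  ⟨consHom (φ x) (m+2) (consHom x (m+1) u), by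
    simp only [d_consHom, mapChains_consHom, map_sub]
    abel⟩

lemma consHom_add_sub_consHom_apply_mem_BC (x : X) (v : CR X (m+1)) :
    consHom x (m+1) (v + consHom x m (d (permOp φ) m (mapChains φ.symm (m+1) v)))
      - consHom (φ x) (m+1) v ∈ BC (permOp φ) (m+2) :=
  ⟨consHom x (m+2) (consHom x (m+1) (mapChains φ.symm (m+1) v)), by
    rw [d_consHom, d_consHom, mapChains_consHom, mapChains_mapChains_symm, map_sub, map_sub,
      map_add]
    abel⟩

lemma forall_consHom_mem_sup_BC_iff (N : AddSubgroup (CR X (m+2))) (x : X) :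
    (∀ u, consHom x (m+1) u ∈ N ⊔ BC (permOp φ) (m+2)) ↔
      ∀ u, consHom (φ x) (m+1) u ∈ N ⊔ BC (permOp φ) (m+2) := by
  constructor
  · intro h v
    rw [← sub_sub_cancel (consHom x (m+1) _) (consHom (φ x) (m+1) v)]
    exact sub_mem (h _) (AddSubgroup.mem_sup_right (consHom_add_sub_consHom_apply_mem_BC φ x v))
  · intro h u
    rw [← sub_add_cancel (consHom x (m+1) u) (consHom (φ x) (m+1) _)]
    exact add_mem (AddSubgroup.mem_sup_right (consHom_sub_consHom_apply_mem_BC φ x u)) (h _)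

end PermutationRack

section HeadSpan

variable {X : Type} {m : ℕ}

noncomputable def headSpan (P : X → Prop) (m : ℕ) : AddSubgroup (CR X (m+1)) :=
  AddSubgroup.closure {c | ∃ x, P x ∧ ∃ u, c = consHom x m u}

variable {P : X → Prop}

lemma consHom_mem_headSpan {x : X} (hx : P x) (u : CR X m) : consHom x m u ∈ headSpan P m :=
  AddSubgroup.subset_closure ⟨x, hx, u, rfl⟩

lemma head_of_mem_support {c : CR X (m+1)} (hc : c ∈ headSpan P m) {w : Fin (m+1) → X}
    (hw : w ∈ c.support) : P (w 0) := by
  classical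
  suffices h : (c.support : Set (Fin (m+1) → X)) ⊆ {w | P (w 0)} from h hw
  clear hw w
  induction hc using AddSubgroup.closure_induction with
  | mem _ h =>
    obtain ⟨x, hx, u, rfl⟩ := h
    intro w hw
    obtain ⟨v, -, rfl⟩ := Finset.mem_image.1 (Finsupp.mapDomain_support (by
      simpa [consHom_eq_mapDomain] using hw))
    exact hx
  | zero => simp
  | add _ _ _ _ hf hg =>
    exact (Finset.coe_subset.2 Finsupp.support_add).trans (by simpa using And.intro hf hg)
  | neg _ _ hf => simpa using hf

lemma d_sub_tailHom_mem_headSpan (φ : X ≃ X) {c : CR X (m+2)} (hc : c ∈ headSpan P (m+1)) :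
    d (permOp φ) (m+1) c - (tailHom (m+1) c - mapChains φ (m+1) (tailHom (m+1) c))
      ∈ headSpan P m := by
  let f := d (permOp φ) (m+1) - (tailHom (m+1) - (mapChains φ (m+1)).comp (tailHom (m+1)))
  suffices headSpan P (m+1) ≤ (headSpan P m).comap f from this hc
  refine (AddSubgroup.closure_le _).2 ?_
  rintro _ ⟨x, hx, u, rfl⟩
  simpa [f, d_consHom] using consHom_mem_headSpan hx (d (permOp φ) m u)

end HeadSpan

section FreePermutationRack

variable {S : Type} {n : ℕ}

def shiftEquiv (S : Type) : ℤ × S ≃ ℤ × S := (Equiv.addRight 1).prodCongr (Equiv.refl S)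

lemma shiftOp_eq_permOp : shiftOp S = permOp (shiftEquiv S) := rfl

lemma consHom_mem_headSpan_sup_BC (x : ℤ × S) (u : CR (ℤ × S) (n+1)) :
    consHom x (n+1) u
      ∈ headSpan (fun y : ℤ × S => y.1 = 0) (n+1) ⊔ BC (permOp (shiftEquiv S)) (n+2) := by
  obtain ⟨k, s⟩ := x
  revert u
  induction k using Int.inductionOn' (b := 0) with
  | zero =>
    exact fun u =>
      AddSubgroup.mem_sup_left (consHom_mem_headSpan (P := fun y : ℤ × S => y.1 = 0) rfl u)
  | succ k _ ih => exact (forall_consHom_mem_sup_BC_iff (shiftEquiv S) _ (k, s)).1 ih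
  | pred k _ ih =>
    refine (forall_consHom_mem_sup_BC_iff (shiftEquiv S) _ (k - 1, s)).2 ?_
    simpa [shiftEquiv] using ih

lemma mem_headSpan_sup_BC (c : CR (ℤ × S) (n+2)) :
    c ∈ headSpan (fun y : ℤ × S => y.1 = 0) (n+1) ⊔ BC (permOp (shiftEquiv S)) (n+2) := by
  induction c using Finsupp.induction_linear with
  | zero => exact zero_mem _
  | add _ _ hf hg => exact add_mem hf hg
  | single w z =>
    rw [← Fin.cons_self_tail w, ← consHom_single]
    exact consHom_mem_headSpan_sup_BC _ _

lemma eq_zero_of_sub_mapChains_mem_headSpan {V : CR (ℤ × S) (n+1)}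
    (hV : V - mapChains (shiftEquiv S) (n+1) V ∈ headSpan (fun y : ℤ × S => y.1 = 0) n) :
    V = 0 := by
  refine Finsupp.eq_zero_of_invariant_off_level_zero (Equiv.piCongrRight fun _ => shiftEquiv S)
    (fun w => (w 0).1) (fun _ => rfl) V fun w hw => ?_
  by_contra hne
  refine hw (head_of_mem_support hV ?_)
  rw [Finsupp.mem_support_iff, Finsupp.sub_apply]
  exact sub_ne_zero.2 (by rwa [← mapChains_apply_comp (shiftEquiv S) V w] at hne)

lemma tailHom_eq_zero_of_d_eq_zero {c : CR (ℤ × S) (n+2)}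
    (hc : c ∈ headSpan (fun y : ℤ × S => y.1 = 0) (n+1))
    (hcycle : d (permOp (shiftEquiv S)) (n+1) c = 0) : tailHom (n+1) c = 0 := by
  refine eq_zero_of_sub_mapChains_mem_headSpan ?_
  have h := d_sub_tailHom_mem_headSpan (shiftEquiv S) hc
  rwa [hcycle, zero_sub, neg_mem_iff] at h

lemma mem_closure_of_tailHom_eq_zero {c : CR (ℤ × S) (n+2)}
    (hc : c ∈ headSpan (fun y : ℤ × S => y.1 = 0) (n+1)) (htail : tailHom (n+1) c = 0) :
    c ∈ AddSubgroup.closure {z : CR (ℤ × S) (n+2) |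
      ∃ (s t : S) (u : CR (ℤ × S) (n+1)),
        z = consHom ((0:ℤ), s) (n+1) u - consHom ((0:ℤ), t) (n+1) u} := by
  rcases eq_or_ne c 0 with rfl | hc0
  · exact zero_mem _
  obtain ⟨w, -⟩ := Finsupp.support_nonempty_iff.2 hc0
  let f := AddMonoidHom.id _ - (consHom ((0:ℤ), (w 0).2) (n+1)).comp (tailHom (n+1))
  suffices headSpan _ (n+1) ≤ (AddSubgroup.closure _).comap f by simpa [f, htail] using this hc
  refine (AddSubgroup.closure_le _).2 ?_
  rintro _ ⟨⟨k, s⟩, rfl, u, rfl⟩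
  exact AddSubgroup.subset_closure ⟨s, (w 0).2, u, by simp [f]⟩

end FreePermutationRack

end RackChain

open RackChain in
/-- On the free permutation rack `(ℤ × S, +1)`, every cycle of degree `≥ 2` is, modulo
boundaries, in the subgroup generated by elements `(s−t)·u` with `s, t ∈ {0} × S`. -/
theorem cycles_start_augmentation_zero (S : Type) (n : ℕ) (c : CR (ℤ × S) (n+2))
    (hc : c ∈ ZC (shiftOp S) (n+2)) :
    ∃ c' : CR (ℤ × S) (n+2), c - c' ∈ BC (shiftOp S) (n+2) ∧
      c' ∈ AddSubgroup.closure {z : CR (ℤ × S) (n+2) |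
        ∃ (s t : S) (u : CR (ℤ × S) (n+1)),
          z = consHom ((0:ℤ), s) (n+1) u - consHom ((0:ℤ), t) (n+1) u} := by
  rw [shiftOp_eq_permOp] at hc ⊢
  obtain ⟨c₀, hc₀, _, ⟨b, rfl⟩, rfl⟩ := AddSubgroup.mem_sup.1 (mem_headSpan_sup_BC c)
  have hcycle : d (permOp (shiftEquiv S)) (n+1) c₀ = 0 := by
    have hc : d (permOp (shiftEquiv S)) (n+1) (c₀ + d _ (n+1+1) b) = 0 := hc
    rwa [map_add, d_d, add_zero] at hc
  exact ⟨c₀, ⟨b, by abel⟩,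
    mem_closure_of_tailHom_eq_zero hc₀ (tailHom_eq_zero_of_d_eq_zero hc₀ hcycle)⟩
end
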